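/- arXiv:2412.10901 — 2 statements merged into one kernel-verified Lean document; each statement's English description precedes it below -/
import Mathlib

section
/- Let Γ = (V,E) be a directed strongly regular graph with parameters (v,k,t,λ,μ), let G be a group of automorphisms of Γ with vertex orbits O_1, …, O_b of sizes n_1, …, n_b, and for each i,j let r_{ij} = |{y ∈ O_j : (x,y) ∈ E}| for any (equivalently, every) x ∈ O_i. Then for all i,j, the entries of the row orbit matrix R = [r_{ij}] satisfy δ_{ij}(t−μ) + μ·n_j + (λ−μ)·r_{ij} = Σ_{z=1}^{b} r_{iz}·r_{zj}, where δ_{ij} is the Kronecker delta. -/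
open Matrix BigOperators

def adjM {V : Type} [Fintype V] (E : V → V → Bool) : Matrix V V ℤ :=
  Matrix.of fun x y => if E x y then 1 else 0

def IsDSRG {V : Type} [Fintype V] [DecidableEq V] (E : V → V → Bool)
    (v k t l m : ℕ) : Prop :=
  Fintype.card V = v ∧ (∀ x, E x x = false) ∧
  adjM E * adjM E + ((m : ℤ) - (l : ℤ)) • adjM E - ((t : ℤ) - (m : ℤ)) • (1 : Matrix V V ℤ)
    = (m : ℤ) • Matrix.of (fun _ _ => (1 : ℤ)) ∧
  adjM E * Matrix.of (fun _ _ => (1 : ℤ)) = (k : ℤ) • Matrix.of (fun _ _ => (1 : ℤ)) ∧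
  Matrix.of (fun _ _ => (1 : ℤ)) * adjM E = (k : ℤ) • Matrix.of (fun _ _ => (1 : ℤ))

def IsAut {V : Type} (E : V → V → Bool) (σ : Equiv.Perm V) : Prop :=
  ∀ x y, E (σ x) (σ y) = E x y

def autGroup {V : Type} (E : V → V → Bool) : Subgroup (Equiv.Perm V) where
  carrier := {σ | ∀ x y, E (σ x) (σ y) = E x y}
  one_mem' := fun _ _ => rfl
  mul_mem' := by
    intro a b ha hb x y
    simp only [Equiv.Perm.coe_mul, Function.comp_apply]
    rw [ha, hb]
  inv_mem' := by
    intro a ha x y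
    have := ha (a⁻¹ x) (a⁻¹ y)
    simpa [Equiv.apply_symm_apply] using this.symm

def Iso {V W : Type} (E : V → V → Bool) (F : W → W → Bool) : Prop :=
  ∃ φ : V ≃ W, ∀ x y, F (φ x) (φ y) = E x y

/-!
Let `o` send each vertex to the index of its orbit and `P = cellMatrix ℤ o` be the resulting
`V × b` incidence matrix. The hypothesis on `r` says exactly `A P = P R`, hence `A² P = P R²`. Expanding `A²` by the defining equation of a DSRG,
`A² = μ J + (λ - μ) A + (t - μ) I`, and reading off the entry of `A² P` in row `x ∈ O_i` and
column `j` gives `μ n_j + (λ - μ) r_{ij} + (t - μ) δ_{ij}` on the left and `(R²)_{ij}` on the right.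
-/

open Finset

section CellMatrix

variable {U V ι κ : Type*} (α : Type*) [NonAssocSemiring α] [DecidableEq ι]

def cellMatrix (o : V → ι) : Matrix V ι α :=
  Matrix.of fun x z => if o x = z then 1 else 0

variable {α}

theorem cellMatrix_apply (o : V → ι) (x : V) (z : ι) :
    cellMatrix α o x z = if o x = z then 1 else 0 :=
  rfl

theorem mul_cellMatrix_apply [Fintype V] (A : Matrix U V α) (o : V → ι) (x : U) (z : ι) :
    (A * cellMatrix α o) x z = ∑ y with o y = z, A x y := by
  simp [Matrix.mul_apply, cellMatrix_apply, Finset.sum_filter]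

theorem cellMatrix_mul_apply [Fintype ι] (o : V → ι) (B : Matrix ι κ α) (x : V) (j : κ) :
    (cellMatrix α o * B) x j = B (o x) j := by
  simp [Matrix.mul_apply, cellMatrix_apply]

theorem ones_mul_cellMatrix_apply [Fintype V] (o : V → ι) (x : U) (z : ι) :
    ((Matrix.of fun _ _ => 1 : Matrix U V α) * cellMatrix α o) x z = #{y | o y = z} := by
  simp [mul_cellMatrix_apply]

end CellMatrix

theorem MulAction.mem_orbit_rep_iff {G X ι : Type*} [Group G] [MulAction G X] {rep : ι → X}
    (hdistinct : ∀ i j, orbit G (rep i) = orbit G (rep j) → i = j) {x : X} {i : ι}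
    (hx : x ∈ orbit G (rep i)) (z : ι) : x ∈ orbit G (rep z) ↔ i = z := by
  refine ⟨fun hz => hdistinct _ _ ((orbit_eq_iff.mpr hx).symm.trans (orbit_eq_iff.mpr hz)), ?_⟩
  rintro rfl
  exact hx

theorem adjM_mul_cellMatrix_apply {V ι : Type} [Fintype V] [DecidableEq ι] (E : V → V → Bool)
    (o : V → ι) (x : V) (z : ι) :
    (adjM E * cellMatrix ℤ o) x z = #{y | o y = z ∧ E x y} := by
  simp [mul_cellMatrix_apply, adjM, Finset.sum_boole, Finset.filter_filter]

theorem IsDSRG.adjM_mul_self {V : Type} [Fintype V] [DecidableEq V] {E : V → V → Bool}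
    {v k t l m : ℕ} (hG : IsDSRG E v k t l m) :
    adjM E * adjM E = (m : ℤ) • Matrix.of (fun _ _ => 1) + ((l : ℤ) - m) • adjM E
      + ((t : ℤ) - m) • 1 := by
  rw [← hG.2.2.1]
  module

theorem IsDSRG.quotient_mul_self_apply {V ι : Type} [Fintype V] [DecidableEq V] [Fintype ι]
    [DecidableEq ι] {E : V → V → Bool} {v k t l m : ℕ} (hG : IsDSRG E v k t l m) (o : V → ι)
    (R : Matrix ι ι ℤ) (hR : adjM E * cellMatrix ℤ o = cellMatrix ℤ o * R) (x : V) (j : ι) :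
    (if o x = j then (t : ℤ) - m else 0) + m * #{y | o y = j} + ((l : ℤ) - m) * R (o x) j
      = (R * R) (o x) j := by
  have hsq : adjM E * adjM E * cellMatrix ℤ o = cellMatrix ℤ o * (R * R) := by
    rw [Matrix.mul_assoc, hR, ← Matrix.mul_assoc, hR, Matrix.mul_assoc]
  have hentry := congrFun (congrFun hsq x) j
  rw [hG.adjM_mul_self, Matrix.add_mul, Matrix.add_mul, Matrix.smul_mul, Matrix.smul_mul,
    Matrix.smul_mul, Matrix.one_mul, hR] at hentry
  simp only [Matrix.add_apply, Matrix.smul_apply, ones_mul_cellMatrix_apply, cellMatrix_mul_apply,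
    cellMatrix_apply, smul_eq_mul, mul_ite, mul_one, mul_zero] at hentry
  rw [← hentry]
  ring

theorem rowOrbitMatrix_equation_general {V : Type} [Fintype V] [DecidableEq V]
    (E : V → V → Bool) (v k t l m : ℕ) (hG : IsDSRG E v k t l m)
    (G : Subgroup (Equiv.Perm V))
    (b : ℕ) (rep : Fin b → V)
    (hcover : ∀ x : V, ∃ i, x ∈ MulAction.orbit G (rep i))
    (hdistinct : ∀ i j : Fin b,
      MulAction.orbit G (rep i) = MulAction.orbit G (rep j) → i = j)
    (r : Fin b → Fin b → ℕ)
    (hr : ∀ i j : Fin b, ∀ x ∈ MulAction.orbit G (rep i),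
        Set.ncard {y ∈ MulAction.orbit G (rep j) | E x y = true} = r i j)
    (i j : Fin b) :
    (if i = j then ((t : ℤ) - (m : ℤ)) else 0)
      + (m : ℤ) * (Set.ncard (MulAction.orbit G (rep j)) : ℤ)
      + ((l : ℤ) - (m : ℤ)) * (r i j : ℤ)
      = ∑ z : Fin b, (r i z : ℤ) * (r z j : ℤ) := by
  choose o ho using hcover
  have horbit : ∀ z, MulAction.orbit G (rep z) = {y | o y = z} :=
    fun z => Set.ext fun y => MulAction.mem_orbit_rep_iff hdistinct (ho y) z
  have hR : adjM E * cellMatrix ℤ o = cellMatrix ℤ o * Matrix.of (fun i j => (r i j : ℤ)) := by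
    ext x z
    rw [adjM_mul_cellMatrix_apply, cellMatrix_mul_apply, Matrix.of_apply, ← hr (o x) z x (ho x),
      horbit]
    simp [Set.ncard_eq_toFinset_card']
  have hrep : o (rep i) = i := (MulAction.mem_orbit_rep_iff hdistinct (ho _) i).1
    (MulAction.mem_orbit_self _)
  simpa [hrep, horbit, Set.ncard_eq_toFinset_card', Matrix.mul_apply]
    using hG.quotient_mul_self_apply o _ hR (rep i) j

/-- the entries of the row orbit matrix `R = [r i j]` of a DSRG with
respect to an automorphism group `G` with orbits `orbit G (rep 1), …, orbit G (rep b)`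
satisfy `δ_{ij}(t−μ) + μ·n_j + (λ−μ)·r_{ij} = Σ_z r_{iz}·r_{zj}`. -/
theorem rowOrbitMatrix_equation {V : Type} [Fintype V] [DecidableEq V]
    (E : V → V → Bool) (v k t l m : ℕ) (hG : IsDSRG E v k t l m)
    (G : Subgroup (Equiv.Perm V)) (hAut : ∀ σ ∈ G, IsAut E σ)
    (b : ℕ) (rep : Fin b → V)
    (hcover : ∀ x : V, ∃ i, x ∈ MulAction.orbit G (rep i))
    (hdistinct : ∀ i j : Fin b,
      MulAction.orbit G (rep i) = MulAction.orbit G (rep j) → i = j)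
    (r : Fin b → Fin b → ℕ)
    (hr : ∀ i j : Fin b, ∀ x ∈ MulAction.orbit G (rep i),
        Set.ncard {y ∈ MulAction.orbit G (rep j) | E x y = true} = r i j)
    (i j : Fin b) :
    (if i = j then ((t : ℤ) - (m : ℤ)) else 0)
      + (m : ℤ) * (Set.ncard (MulAction.orbit G (rep j)) : ℤ)
      + ((l : ℤ) - (m : ℤ)) * (r i j : ℤ)
      = ∑ z : Fin b, (r i z : ℤ) * (r z j : ℤ) :=
  rowOrbitMatrix_equation_general E v k t l m hG G b rep hcover hdistinct r hr i j
end

section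
/- No directed strongly regular graph with parameters (22,9,6,3,4) admits an automorphism of order 7. -/
open Matrix BigOperators

/-! An automorphism `σ` of prime order `p` moves the points of any `σ`-invariant vertex set in
`p`-cycles, so `p` divides the number of moved points there. For `(v, k, t) = (22, 9, 6)` and
`p = 7 > t`, the `t` mutual neighbours of a fixed vertex are therefore fixed, and then so are its
remaining `k - t < p` out- and in-neighbours. Consequently both the fixed and the moved vertices
are closed under taking out-neighbours, so each class is empty or has at least `k + 1 = 10`
vertices. Since `σ ≠ 1` and `7` divides the number of moved vertices, they cannot add up to `22`.
-/

open Finset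

namespace Equiv.Perm

variable {α : Type*} [Fintype α] [DecidableEq α] {σ : Perm α} {p : ℕ}

theorem prime_dvd_card_support (hp : p.Prime) (hσ : σ ^ p = 1) : p ∣ #σ.support := by
  have := Fact.mk hp
  rw [← σ.sum_cycleType, cycleType_of_pow_prime_eq_one hσ, Multiset.sum_replicate, smul_eq_mul]
  exact dvd_mul_left _ _

theorem prime_dvd_card_filter_ne (hp : p.Prime) (hσ : σ ^ p = 1) (P : α → Prop)
    [DecidablePred P] (hP : ∀ x, P (σ x) ↔ P x) : p ∣ #{x | P x ∧ σ x ≠ x} := by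
  set τ := ofSubtype (σ.subtypePerm hP)
  have hτ : τ ^ p = 1 := by
    simp only [τ, ← map_pow, subtypePerm_pow, hσ]
    rw [subtypePerm_one, map_one]
  have hsupp : τ.support = ({x | P x ∧ σ x ≠ x} : Finset α) := by
    ext x
    by_cases hx : P x <;> simp [τ, hx, ofSubtype_apply_of_mem, ofSubtype_apply_of_not_mem]
  exact hsupp ▸ prime_dvd_card_support hp hτ

theorem apply_eq_of_card_lt (hp : p.Prime) (hσ : σ ^ p = 1) (P : α → Prop)
    [DecidablePred P] (hP : ∀ x, P (σ x) ↔ P x)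
    (hcard : #{x | P x} < p + #{x | P x ∧ σ x = x}) {x : α} (hx : P x) : σ x = x := by
  by_contra hne
  have hsplit : #{x | P x ∧ σ x = x} + #{x | P x ∧ σ x ≠ x} = #{x | P x} := by
    simpa only [filter_filter] using
      card_filter_add_card_filter_not (s := {x | P x}) (fun x => σ x = x)
  have hpos : 0 < #{x | P x ∧ σ x ≠ x} := card_pos.2 ⟨x, by simp [hx, hne]⟩
  have := Nat.le_of_dvd hpos (prime_dvd_card_filter_ne hp hσ P hP)
  omega

end Equiv.Perm

section DirectedStronglyRegular

variable {V : Type} [Fintype V] (E : V → V → Bool)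

def outNeighbors (x : V) : Finset V := {z | E x z = true}

def inNeighbors (x : V) : Finset V := {z | E z x = true}

def mutualNeighbors (x : V) : Finset V := {z | E x z = true ∧ E z x = true}

variable {E} [DecidableEq V] {v k t l m : ℕ}

theorem IsDSRG.card_outNeighbors (hG : IsDSRG E v k t l m) (x : V) :
    #(outNeighbors E x) = k := by
  have h := congrFun (congrFun hG.2.2.2.1 x) x
  simp only [Matrix.mul_apply, adjM, Matrix.smul_apply, of_apply, smul_eq_mul, mul_one,
    sum_boole] at h
  exact_mod_cast h

theorem IsDSRG.card_inNeighbors (hG : IsDSRG E v k t l m) (x : V) :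
    #(inNeighbors E x) = k := by
  have h := congrFun (congrFun hG.2.2.2.2 x) x
  simp only [Matrix.mul_apply, adjM, Matrix.smul_apply, of_apply, smul_eq_mul, one_mul, mul_one,
    sum_boole] at h
  exact_mod_cast h

theorem IsDSRG.card_mutualNeighbors (hG : IsDSRG E v k t l m) (x : V) :
    #(mutualNeighbors E x) = t := by
  have h := congrFun (congrFun hG.2.2.1 x) x
  simp only [Matrix.sub_apply, Matrix.add_apply, Matrix.mul_apply, Matrix.smul_apply,
    one_apply_eq, of_apply, smul_eq_mul, adjM, hG.2.1 x, ite_mul, one_mul, zero_mul, ← ite_and,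
    sum_boole, Bool.false_eq_true, if_false, mul_zero, mul_one, add_zero] at h
  have : (#(mutualNeighbors E x) : ℤ) = t := by
    simp only [mutualNeighbors]
    linarith
  exact_mod_cast this

theorem IsDSRG.add_one_le_card (hG : IsDSRG E v k t l m) {T : Finset V}
    (hT : ∀ x ∈ T, outNeighbors E x ⊆ T) (hne : T.Nonempty) : k + 1 ≤ #T := by
  obtain ⟨x, hx⟩ := hne
  have hloop : x ∉ outNeighbors E x := by simp [outNeighbors, hG.2.1 x]
  calc k + 1 = #(insert x (outNeighbors E x)) := by
        rw [card_insert_of_notMem hloop, hG.card_outNeighbors]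
    _ ≤ #T := card_le_card (insert_subset hx (hT x hx))

end DirectedStronglyRegular

namespace IsAut

variable {V : Type} {E : V → V → Bool} {σ : Equiv.Perm V} {x : V}

theorem adj_apply_left (hσ : IsAut E σ) (hx : σ x = x) (z : V) : E x (σ z) = E x z := by
  rw [← hσ x z, hx]

theorem adj_apply_right (hσ : IsAut E σ) (hx : σ x = x) (z : V) : E (σ z) x = E z x := by
  rw [← hσ z x, hx]

variable [Fintype V] [DecidableEq V] {v k t l m p : ℕ}

theorem apply_eq_of_mem_mutualNeighbors (hσ : IsAut E σ) (hG : IsDSRG E v k t l m)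
    (hp : p.Prime) (hσp : σ ^ p = 1) (htp : t < p) (hx : σ x = x) {z : V}
    (hz : z ∈ mutualNeighbors E x) : σ z = z := by
  refine Equiv.Perm.apply_eq_of_card_lt hp hσp (fun z => E x z = true ∧ E z x = true)
    (fun z => by rw [hσ.adj_apply_left hx, hσ.adj_apply_right hx])
    ((hG.card_mutualNeighbors x).trans_lt (htp.trans_le (Nat.le_add_right p _)))
    (mem_filter.1 hz).2

theorem apply_eq_of_mutualNeighbors_subset (hσ : IsAut E σ) (hG : IsDSRG E v k t l m)
    (hp : p.Prime) (hσp : σ ^ p = 1) (htp : t < p) (hkp : k < p + t) (hx : σ x = x)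
    (P : V → Prop) [DecidablePred P] (hP : ∀ z, P (σ z) ↔ P z) (hPcard : #{z | P z} = k)
    (hmutual : ∀ z ∈ mutualNeighbors E x, P z) {z : V} (hz : P z) : σ z = z := by
  refine Equiv.Perm.apply_eq_of_card_lt hp hσp P hP ?_ hz
  have hsub : mutualNeighbors E x ⊆ ({z | P z ∧ σ z = z} : Finset V) := fun z hz =>
    mem_filter.2 ⟨mem_univ z, hmutual z hz,
      hσ.apply_eq_of_mem_mutualNeighbors hG hp hσp htp hx hz⟩
  have := card_le_card hsub
  rw [hG.card_mutualNeighbors] at this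
  omega

theorem apply_eq_of_mem_outNeighbors (hσ : IsAut E σ) (hG : IsDSRG E v k t l m)
    (hp : p.Prime) (hσp : σ ^ p = 1) (htp : t < p) (hkp : k < p + t) (hx : σ x = x) {z : V}
    (hz : z ∈ outNeighbors E x) : σ z = z :=
  hσ.apply_eq_of_mutualNeighbors_subset hG hp hσp htp hkp hx (fun z => E x z = true)
    (fun z => by rw [hσ.adj_apply_left hx]) (hG.card_outNeighbors x)
    (fun _ hz => (mem_filter.1 hz).2.1) (mem_filter.1 hz).2

theorem apply_eq_of_mem_inNeighbors (hσ : IsAut E σ) (hG : IsDSRG E v k t l m)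
    (hp : p.Prime) (hσp : σ ^ p = 1) (htp : t < p) (hkp : k < p + t) (hx : σ x = x) {z : V}
    (hz : z ∈ inNeighbors E x) : σ z = z :=
  hσ.apply_eq_of_mutualNeighbors_subset hG hp hσp htp hkp hx (fun z => E z x = true)
    (fun z => by rw [hσ.adj_apply_right hx]) (hG.card_inNeighbors x)
    (fun _ hz => (mem_filter.1 hz).2.2) (mem_filter.1 hz).2

theorem outNeighbors_subset_compl_support (hσ : IsAut E σ) (hG : IsDSRG E v k t l m)
    (hp : p.Prime) (hσp : σ ^ p = 1) (htp : t < p) (hkp : k < p + t) :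
    ∀ x ∈ σ.supportᶜ, outNeighbors E x ⊆ σ.supportᶜ := by
  intro x hx z hz
  simp only [mem_compl, Equiv.Perm.notMem_support] at hx ⊢
  exact hσ.apply_eq_of_mem_outNeighbors hG hp hσp htp hkp hx hz

theorem outNeighbors_subset_support (hσ : IsAut E σ) (hG : IsDSRG E v k t l m)
    (hp : p.Prime) (hσp : σ ^ p = 1) (htp : t < p) (hkp : k < p + t) :
    ∀ y ∈ σ.support, outNeighbors E y ⊆ σ.support := by
  intro y hy z hz
  by_contra hzfix
  rw [Equiv.Perm.notMem_support] at hzfix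
  have hyz : y ∈ inNeighbors E z := by simpa [inNeighbors, outNeighbors] using hz
  exact Equiv.Perm.mem_support.1 hy
    (hσ.apply_eq_of_mem_inNeighbors hG hp hσp htp hkp hzfix hyz)

end IsAut

/-- no DSRG(22,9,6,3,4) admits an automorphism of order 7. -/
theorem no_automorphism_of_order_7 {V : Type} [Fintype V] [DecidableEq V]
    (E : V → V → Bool) (hG : IsDSRG E 22 9 6 3 4)
    (σ : Equiv.Perm V) (hσ : IsAut E σ) :
    orderOf σ ≠ 7 := by
  intro h7
  have hp : Nat.Prime 7 := by norm_num
  have hσ7 : σ ^ 7 = 1 := h7 ▸ pow_orderOf_eq_one σ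
  have hσ1 : σ ≠ 1 := by rintro rfl; simp at h7
  have hmoved : 10 ≤ #σ.support :=
    hG.add_one_le_card (hσ.outNeighbors_subset_support hG hp hσ7 (by norm_num) (by norm_num))
      (nonempty_iff_ne_empty.2 (Equiv.Perm.support_eq_empty_iff.not.2 hσ1))
  have hfixed : #σ.supportᶜ = 0 ∨ 10 ≤ #σ.supportᶜ := by
    rcases σ.supportᶜ.eq_empty_or_nonempty with hempty | hne
    · exact Or.inl (card_eq_zero.2 hempty)
    · exact Or.inr (hG.add_one_le_card
        (hσ.outNeighbors_subset_compl_support hG hp hσ7 (by norm_num) (by norm_num)) hne)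
  have hdvd : 7 ∣ #σ.support := Equiv.Perm.prime_dvd_card_support hp hσ7
  have hcard : #σ.support + #σ.supportᶜ = 22 := by rw [card_add_card_compl, hG.1]
  omega
end
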